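/- The tensor rank of |W⟩^{⊗2} in ℂ⁴⊗ℂ⁴⊗ℂ⁴ (copies regrouped by party) is at least 7; combined with the upper bound, rk(|W⟩^{⊗2}) = 7. -/

import Mathlib

open TensorProduct

/-- Tripartite tensor rank: minimal number of product vectors summing to `ψ`. -/
noncomputable def tRank {A B C : Type*} [AddCommGroup A] [Module ℂ A]
    [AddCommGroup B] [Module ℂ B] [AddCommGroup C] [Module ℂ C]
    (ψ : A ⊗[ℂ] (B ⊗[ℂ] C)) : ℕ :=
  sInf {r | ∃ (a : Fin r → A) (b : Fin r → B) (c : Fin r → C),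
    ψ = ∑ i, a i ⊗ₜ[ℂ] (b i ⊗ₜ[ℂ] c i)}

/-- ℂ⁴ with standard basis `e 0, e 1, e 2, e 3`. -/
abbrev Q4 : Type := Fin 4 → ℂ

noncomputable def e (i : Fin 4) : Q4 := Pi.single i 1

/-- Party-`p` index (in `Fin 4`, via `|i⟩=|i₀i₁⟩`, `|0⟩=|00⟩,|1⟩=|01⟩,|2⟩=|10⟩,|3⟩=|11⟩`)
of the summand of `W ⊗ W` in which copy 1 gives its excitation to party `f 0`
and copy 2 to party `f 1`. -/
def idx (p : Fin 3) (f : Fin 2 → Fin 3) : Fin 4 :=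
  2 * (if f 0 = p then 1 else 0) + (if f 1 = p then 1 else 0)

/-- `W ⊗ W`, regrouped party-wise as an element of `ℂ⁴ ⊗ ℂ⁴ ⊗ ℂ⁴`. -/
noncomputable def W2 : Q4 ⊗[ℂ] (Q4 ⊗[ℂ] Q4) :=
  ∑ f : Fin 2 → Fin 3, e (idx 0 f) ⊗ₜ[ℂ] (e (idx 1 f) ⊗ₜ[ℂ] e (idx 2 f))

/-!
Upper bound: `W2` is a symmetric tensor whose cubic form is `3x₀²x₃ + 6x₀x₁x₂`, and this cubic is
a sum of seven cubes of linear forms.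

Lower bound, by the substitution method: in a decomposition `W2 = ∑ᵢ aᵢ ⊗ bᵢ ⊗ cᵢ` with `r` terms,
each slice `Tₓ` of `W2` along the first party lies in the span of the rank-one matrices `bᵢ cᵢᵀ`.
The slices `T₁, T₂, T₃` are linearly independent, so by Steinitz exchange they can replace three of
these matrices; then some `T₀ + a T₁ + b T₂ + c T₃` is a combination of `r - 3` rank-one matrices.
But every such matrix is anti-triangular with unit anti-diagonal, hence of rank 4, so `r ≥ 7`.
-/

open Submodule

section Exchange

variable {K E ι κ : Type*} [Field K] [AddCommGroup E] [Module K E]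

lemma exists_mem_span_insert_erase [DecidableEq κ] (M : κ → E) {Y : Set E} {v : E}
    {s : Finset κ} (hv : v ∈ span K (M '' s ∪ Y)) (hvY : v ∉ span K Y) :
    ∃ i ∈ s, M i ∈ span K (insert v (M '' (s.erase i) ∪ Y)) := by
  induction s using Finset.induction_on with
  | empty => simp_all
  | insert j t hj ih =>
    rw [Finset.coe_insert, Set.image_insert_eq, Set.insert_union] at hv
    by_cases hvt : v ∈ span K (M '' t ∪ Y)
    · obtain ⟨i, hi, hMi⟩ := ih hvt
      refine ⟨i, Finset.mem_insert_of_mem hi, span_mono ?_ hMi⟩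
      gcongr
      exact Finset.coe_subset.2 (Finset.subset_insert _ _)
    · exact ⟨j, Finset.mem_insert_self _ _, by
        simpa [Finset.erase_insert hj] using mem_span_insert_exchange hv hvt⟩

lemma exists_subset_card_add_le_span_le [DecidableEq κ] [DecidableEq ι] (M : κ → E)
    (T : ι → E) (s : Finset κ) {S : Finset ι} (hS : LinearIndepOn K T S)
    (hT : ∀ y ∈ S, T y ∈ span K (M '' s)) :
    ∃ s' ⊆ s, s'.card + S.card ≤ s.card ∧ span K (M '' s) ≤ span K (M '' s' ∪ T '' S) := by
  induction S using Finset.induction_on with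
  | empty => exact ⟨s, subset_rfl, by simp, span_mono Set.subset_union_left⟩
  | insert y S hy ih =>
    rw [Finset.coe_insert] at hS
    obtain ⟨s', hs', hcard, hspan⟩ :=
      ih (hS.mono (Set.subset_insert _ _)) fun z hz => hT z (Finset.mem_insert_of_mem hz)
    obtain ⟨i, hi, hMi⟩ := exists_mem_span_insert_erase M
      (hspan (hT y (Finset.mem_insert_self _ _))) (hS.notMem_span_of_insert hy)
    refine ⟨s'.erase i, (Finset.erase_subset _ _).trans hs', ?_, hspan.trans (span_le.2 ?_)⟩
    · rw [Finset.card_erase_of_mem hi, Finset.card_insert_of_notMem hy]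
      have := Finset.card_pos.2 ⟨i, hi⟩
      omega
    · rintro _ (⟨k, hk, rfl⟩ | ⟨z, hz, rfl⟩)
      · obtain rfl | hki := eq_or_ne k i
        · simpa [Finset.coe_insert, Set.image_insert_eq, Set.union_insert] using hMi
        · exact subset_span (Or.inl ⟨k, Finset.mem_erase.2 ⟨hki, hk⟩, rfl⟩)
      · exact subset_span (Or.inr ⟨z, Finset.mem_insert_of_mem hz, rfl⟩)

end Exchange

namespace Matrix

variable {K m n κ : Type*} [Field K] [Fintype n]

lemma rank_add_le (A B : Matrix m n K) : (A + B).rank ≤ A.rank + B.rank := by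
  rw [rank, mulVecLin_add]
  exact (finrank_mono (LinearMap.range_add_le _ _)).trans (finrank_add_le_finrank_add_finrank _ _)

lemma rank_smul_le (c : K) (A : Matrix m n K) : (c • A).rank ≤ A.rank := by
  rw [rank, show (c • A).mulVecLin = c • A.mulVecLin from LinearMap.ext (smul_mulVec c A)]
  exact finrank_mono (LinearMap.range_smul_le_range _ _)

lemma rank_le_card_of_mem_span [DecidableEq κ] (M : κ → Matrix m n K) {s : Finset κ}
    (hM : ∀ i ∈ s, (M i).rank ≤ 1) {A : Matrix m n K} (hA : A ∈ span K (M '' s)) :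
    A.rank ≤ s.card := by
  induction s using Finset.induction_on generalizing A with
  | empty => simp_all [rank_zero]
  | insert j t hj ih =>
    rw [Finset.coe_insert, Set.image_insert_eq, mem_span_insert] at hA
    obtain ⟨c, B, hB, rfl⟩ := hA
    calc (c • M j + B).rank ≤ (M j).rank + B.rank :=
          (rank_add_le _ _).trans (Nat.add_le_add_right (rank_smul_le _ _) _)
      _ ≤ 1 + t.card := Nat.add_le_add (hM j (Finset.mem_insert_self _ _))
          (ih (fun i hi => hM i (Finset.mem_insert_of_mem hi)) hB)
      _ = (insert j t).card := by rw [Finset.card_insert_of_notMem hj, add_comm]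

end Matrix

section Slice

variable {K ι m n : Type*} [CommSemiring K]

noncomputable def slice (x : ι) : (ι → K) ⊗[K] ((m → K) ⊗[K] (n → K)) →ₗ[K] Matrix m n K :=
  TensorProduct.lift ((LinearMap.proj x).smulRight (TensorProduct.lift (vecMulVecBilin K K)))

@[simp]
lemma slice_tmul (x : ι) (a : ι → K) (b : m → K) (c : n → K) :
    slice x (a ⊗ₜ[K] (b ⊗ₜ[K] c)) = a x • Matrix.vecMulVec b c := by
  simp [slice]

end Slice

section SubstitutionMethod

variable {K ι m n : Type*} [Field K]

theorem card_add_le_of_eq_sum_tmul [DecidableEq ι] [Fintype n] {r : ℕ}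
    (a : Fin r → ι → K) (b : Fin r → m → K) (c : Fin r → n → K)
    {ψ : (ι → K) ⊗[K] ((m → K) ⊗[K] (n → K))} (hψ : ψ = ∑ i, a i ⊗ₜ[K] (b i ⊗ₜ[K] c i))
    {S : Finset ι} (hS : LinearIndepOn K (fun y => slice y ψ) S) (x₀ : ι) {k : ℕ}
    (hk : ∀ g : ι → K, k ≤ (slice x₀ ψ + ∑ y ∈ S, g y • slice y ψ).rank) :
    S.card + k ≤ r := by
  set M : Fin r → Matrix m n K := fun i => Matrix.vecMulVec (b i) (c i)
  have hslice : ∀ y, slice y ψ ∈ span K (M '' (Finset.univ : Finset (Fin r))) := fun y => by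
    rw [hψ, map_sum]
    exact sum_mem fun i _ => by
      simpa using smul_mem _ (a i y)
        (subset_span (Set.mem_image_of_mem M (Finset.mem_coe.2 (Finset.mem_univ i))))
  obtain ⟨s', -, hcard, hspan⟩ :=
    exists_subset_card_add_le_span_le M (fun y => slice y ψ) Finset.univ hS fun y _ => hslice y
  have hx₀ : slice x₀ ψ ∈ span K (M '' s') ⊔ span K ((fun y => slice y ψ) '' S) := by
    rw [← span_union]
    exact hspan (hslice x₀)
  obtain ⟨w, hw, u, hu, hwu⟩ := mem_sup.1 hx₀
  obtain ⟨g, rfl⟩ := (mem_span_image_finset_iff_exists_fun' K).1 hu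
  have hk' : k ≤ w.rank := by
    simpa [← hwu, Finset.sum_neg_distrib] using hk (-g)
  have hw' : w.rank ≤ s'.card :=
    Matrix.rank_le_card_of_mem_span M (fun i _ => Matrix.rank_vecMulVec_le _ _) hw
  simp only [Finset.card_univ, Fintype.card_fin] at hcard
  omega

end SubstitutionMethod

lemma W2_eq : W2 =
    (e 3 ⊗ₜ (e 0 ⊗ₜ e 0) + e 2 ⊗ₜ (e 1 ⊗ₜ e 0) + e 2 ⊗ₜ (e 0 ⊗ₜ e 1)) +
    (e 1 ⊗ₜ (e 2 ⊗ₜ e 0) + e 0 ⊗ₜ (e 3 ⊗ₜ e 0) + e 0 ⊗ₜ (e 2 ⊗ₜ e 1)) +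
    (e 1 ⊗ₜ (e 0 ⊗ₜ e 2) + e 0 ⊗ₜ (e 1 ⊗ₜ e 2) + e 0 ⊗ₜ (e 0 ⊗ₜ e 3)) := by
  rw [W2, ← (piFinTwoEquiv fun _ => Fin 3).symm.sum_comp, Fintype.sum_prod_type]
  simp [Fin.sum_univ_three, idx]

lemma sum_slice_W2 (g : Fin 4 → ℂ) : ∑ y ∈ {1, 2, 3}, g y • slice y W2 =
    !![g 3, g 2, g 1, 0; g 2, 0, 0, 0; g 1, 0, 0, 0; 0, 0, 0, 0] := by
  ext i j
  fin_cases i <;> fin_cases j <;> simp [W2_eq, e, Matrix.vecMulVec]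

lemma linearIndepOn_slice_W2 :
    LinearIndepOn ℂ (fun y => slice y W2) (({1, 2, 3} : Finset (Fin 4)) : Set (Fin 4)) := by
  rw [linearIndepOn_finset_iff]
  intro g hg y hy
  rw [sum_slice_W2] at hg
  simp only [Finset.mem_insert, Finset.mem_singleton] at hy
  rcases hy with rfl | rfl | rfl
  · simpa using congr_fun₂ hg 0 2
  · simpa using congr_fun₂ hg 0 1
  · simpa using congr_fun₂ hg 0 0

lemma slice_zero_W2_add_sum (g : Fin 4 → ℂ) : slice 0 W2 + ∑ y ∈ {1, 2, 3}, g y • slice y W2 =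
    !![g 3, g 2, g 1, 1; g 2, 0, 1, 0; g 1, 1, 0, 0; 1, 0, 0, 0] := by
  rw [sum_slice_W2]
  ext i j
  fin_cases i <;> fin_cases j <;> simp [W2_eq, e, Matrix.vecMulVec]

lemma four_le_rank_slice_W2 (g : Fin 4 → ℂ) :
    4 ≤ (slice 0 W2 + ∑ y ∈ {1, 2, 3}, g y • slice y W2).rank := by
  rw [slice_zero_W2_add_sum, Matrix.rank_of_det_ne_zero]
  · simp
  · simp [Matrix.det_succ_row_zero, Fin.sum_univ_succ, Fin.succAbove]

-- `½(x₀+x₃)³ - ½(x₀-x₃)³ - x₃³ = 3x₀²x₃` and `¼ ∑ ±(x₀±x₁±x₂)³ = 6x₀x₁x₂`, where the outer sign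
-- is the product of the inner ones.
noncomputable def waringCoeff : Fin 7 → ℂ := ![1/2, -1/2, -1, 1/4, -1/4, -1/4, 1/4]

noncomputable def waringVec : Fin 7 → Q4 :=
  ![e 0 + e 3, e 0 - e 3, e 3, e 0 + e 1 + e 2, e 0 + e 1 - e 2, e 0 - e 1 + e 2, e 0 - e 1 - e 2]

lemma W2_eq_sum_waring :
    W2 = ∑ i, (waringCoeff i • waringVec i) ⊗ₜ[ℂ] (waringVec i ⊗ₜ[ℂ] waringVec i) := by
  simp only [W2_eq, Fin.sum_univ_seven, waringCoeff, waringVec, Matrix.cons_val, smul_add,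
    smul_sub, add_tmul, sub_tmul, tmul_add, tmul_sub, ← smul_tmul']
  module

theorem rank_W2_ge_seven_and_eq_seven : 7 ≤ tRank W2 ∧ tRank W2 = 7 := by
  have hW2 : 7 ∈ {r | ∃ (a b c : Fin r → Q4), W2 = ∑ i, a i ⊗ₜ[ℂ] (b i ⊗ₜ[ℂ] c i)} :=
    ⟨fun i => waringCoeff i • waringVec i, waringVec, waringVec, W2_eq_sum_waring⟩
  have hge : 7 ≤ tRank W2 := le_csInf ⟨7, hW2⟩ fun r ⟨a, b, c, h⟩ =>
    card_add_le_of_eq_sum_tmul a b c h linearIndepOn_slice_W2 0 four_le_rank_slice_W2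
  exact ⟨hge, le_antisymm (Nat.sInf_le hW2) hge⟩
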